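/- arXiv:2107.08346 — 4 statements merged into one kernel-verified Lean document; each statement's English description precedes it below -/
import Mathlib

section
/- Let X be a finite set partitioned into layers X_0, ..., X_H with X_H a single terminal state. Let π be a policy, P a transition kernel mapping layer h to layer h+1, and let b, ε : X×A → ℝ≥0 be nonnegative functions satisfying b(x,a) ≤ ε(x,a) + (1/H)·E_{x'∼P(·|x,a)}[V^π(x'; b)] for all (x,a), where V^π(x; f) denotes the expected sum of f along a trajectory following π and P starting from x (with V^π(x_H; f)=0). Then V^π(x_0; b) ≤ 3·V^π(x_0; ε). -/
/-! Backward induction over the layers gives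
`V^π(x; b) ≤ (1 + 1/H)^(H - layer x) · V^π(x; ε)`: one step of the Bellman recursion multiplies
the continuation value by at most `1 + 1/H`, and the slack `ε` is absorbed because the
accumulated factor is at least `1`. Finally `(1 + 1/H)^H ≤ e < 3`. -/

open Finset

theorem Finset.sum_mul_le_sum_mul_of_ne_zero {ι : Type*} {s : Finset ι} {w f g : ι → ℝ}
    (hw : ∀ i, 0 ≤ w i) (hfg : ∀ i, w i ≠ 0 → f i ≤ g i) :
    ∑ i ∈ s, w i * f i ≤ ∑ i ∈ s, w i * g i := by
  refine sum_le_sum fun i _ => ?_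
  by_cases hi : w i = 0
  · simp [hi]
  · exact mul_le_mul_of_nonneg_left (hfg i hi) (hw i)

theorem one_add_inv_pow_le_three {n k : ℕ} (hk : k ≤ n) : (1 + (n : ℝ)⁻¹) ^ k ≤ 3 :=
  calc (1 + (n : ℝ)⁻¹) ^ k ≤ (1 + (n : ℝ)⁻¹) ^ n :=
        pow_le_pow_right₀ (le_add_of_nonneg_right (by positivity)) hk
    _ ≤ Real.exp 1 := Real.one_add_inv_pow_le_exp
    _ ≤ 3 := Real.exp_one_lt_three.le

namespace LayeredMDP

variable {X A : Type*} {H : ℕ} {layer : X → ℕ}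

theorem layer_induction (hlayer : ∀ x, layer x ≤ H) {Q : X → Prop}
    (terminal : ∀ x, layer x = H → Q x)
    (step : ∀ x, layer x < H → (∀ x', layer x' = layer x + 1 → Q x') → Q x) (x : X) :
    Q x := by
  suffices ∀ k, ∀ x, H - layer x = k → Q x from this _ x rfl
  intro k
  induction k with
  | zero => exact fun x hx => terminal x (by have := hlayer x; omega)
  | succ k ih =>
    exact fun x hx => step x (by omega) fun x' hx' => ih x' (by omega)

variable [Fintype X] [Fintype A] {π : X → A → ℝ} {P : X → A → X → ℝ}

theorem value_nonneg (hlayer : ∀ x, layer x ≤ H) (hπ0 : ∀ x a, 0 ≤ π x a)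
    (hP0 : ∀ x a x', 0 ≤ P x a x')
    (hPlayer : ∀ x a x', P x a x' ≠ 0 → layer x' = layer x + 1)
    {f : X → A → ℝ} (hf0 : ∀ x a, 0 ≤ f x a) {V : X → ℝ}
    (hVH : ∀ x, layer x = H → V x = 0)
    (hV : ∀ x, layer x < H → V x = ∑ a, π x a * (f x a + ∑ x', P x a x' * V x')) (x : X) :
    0 ≤ V x := by
  refine layer_induction hlayer (fun x hx => (hVH x hx).ge) (fun x hx ih => ?_) x
  rw [hV x hx]
  refine sum_nonneg fun a _ => mul_nonneg (hπ0 x a) (add_nonneg (hf0 x a) ?_)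
  simpa using sum_mul_le_sum_mul_of_ne_zero (s := univ) (f := 0) (hP0 x a)
    fun x' hx' => ih x' (hPlayer x a x' hx')

theorem value_le_one_add_pow_mul_value (hlayer : ∀ x, layer x ≤ H)
    (hπ0 : ∀ x a, 0 ≤ π x a) (hP0 : ∀ x a x', 0 ≤ P x a x')
    (hPlayer : ∀ x a x', P x a x' ≠ 0 → layer x' = layer x + 1)
    {b ε : X → A → ℝ} (hε0 : ∀ x a, 0 ≤ ε x a) {Vb Vε : X → ℝ}
    (hVbH : ∀ x, layer x = H → Vb x = 0) (hVεH : ∀ x, layer x = H → Vε x = 0)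
    (hVb : ∀ x, layer x < H → Vb x = ∑ a, π x a * (b x a + ∑ x', P x a x' * Vb x'))
    (hVε : ∀ x, layer x < H → Vε x = ∑ a, π x a * (ε x a + ∑ x', P x a x' * Vε x'))
    {δ : ℝ} (hδ : 0 ≤ δ)
    (hkey : ∀ x a, layer x < H → b x a ≤ ε x a + δ * ∑ x', P x a x' * Vb x') (x : X) :
    Vb x ≤ (1 + δ) ^ (H - layer x) * Vε x := by
  refine layer_induction (Q := fun x => Vb x ≤ (1 + δ) ^ (H - layer x) * Vε x) hlayer
    (fun x hx => by simp [hVbH x hx, hVεH x hx])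
    (fun x hx ih => ?_) x
  set M := (1 + δ) ^ (H - (layer x + 1))
  have hpow : (1 + δ) ^ (H - layer x) = (1 + δ) * M := by
    rw [← pow_succ']
    congr 1
    omega
  have hM : 1 ≤ (1 + δ) * M :=
    one_le_mul_of_one_le_of_one_le (by linarith) (one_le_pow₀ (by linarith))
  rw [hVb x hx, hVε x hx, mul_sum]
  refine sum_le_sum fun a _ => ?_
  have hnext : ∑ x', P x a x' * Vb x' ≤ M * ∑ x', P x a x' * Vε x' := by
    rw [mul_sum]
    refine (sum_mul_le_sum_mul_of_ne_zero (hP0 x a) fun x' hx' => ?_).trans_eq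
      (sum_congr rfl fun x' _ => mul_left_comm _ _ _)
    simpa [hPlayer x a x' hx'] using ih x' (hPlayer x a x' hx')
  have hstep :
      b x a + ∑ x', P x a x' * Vb x' ≤ (1 + δ) * M * (ε x a + ∑ x', P x a x' * Vε x') :=
    calc b x a + ∑ x', P x a x' * Vb x' ≤ ε x a + (1 + δ) * ∑ x', P x a x' * Vb x' := by
          linarith [hkey x a hx]
      _ ≤ ε x a + (1 + δ) * (M * ∑ x', P x a x' * Vε x') := by gcongr
      _ ≤ (1 + δ) * M * (ε x a + ∑ x', P x a x' * Vε x') := by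
          nlinarith [hε0 x a]
  rw [hpow, mul_left_comm]
  exact mul_le_mul_of_nonneg_left hstep (hπ0 x a)

end LayeredMDP

open LayeredMDP

theorem stmt_1_general
    {X A : Type*} [Fintype X] [Fintype A]
    (H : ℕ)
    (layer : X → ℕ) (hlayer : ∀ x, layer x ≤ H)
    (x0 : X)
    -- policy π : a probability distribution over actions in each state
    (π : X → A → ℝ) (hπ0 : ∀ x a, 0 ≤ π x a)
    -- transition kernel P, supported on the next layer
    (P : X → A → X → ℝ) (hP0 : ∀ x a x', 0 ≤ P x a x')
    (hPlayer : ∀ x a x', P x a x' ≠ 0 → layer x' = layer x + 1)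
    -- nonnegative loss functions b and ε
    (b ε : X → A → ℝ) (hε0 : ∀ x a, 0 ≤ ε x a)
    -- value functions of π under losses b and ε (Bellman equations)
    (Vb Vε : X → ℝ)
    (hVbH : ∀ x, layer x = H → Vb x = 0)
    (hVεH : ∀ x, layer x = H → Vε x = 0)
    (hVb : ∀ x, layer x < H →
      Vb x = ∑ a, π x a * (b x a + ∑ x', P x a x' * Vb x'))
    (hVε : ∀ x, layer x < H →
      Vε x = ∑ a, π x a * (ε x a + ∑ x', P x a x' * Vε x'))
    -- the key condition relating b and ε
    (hkey : ∀ x a, layer x < H →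
      b x a ≤ ε x a + (1 / (H : ℝ)) * ∑ x', P x a x' * Vb x') :
    Vb x0 ≤ 3 * Vε x0 := by
  have hcompare := value_le_one_add_pow_mul_value hlayer hπ0 hP0 hPlayer hε0 hVbH hVεH hVb hVε
    (by positivity) hkey x0
  have hVε0 := value_nonneg hlayer hπ0 hP0 hPlayer hε0 hVεH hVε x0
  rw [one_div] at hcompare
  exact hcompare.trans
    (mul_le_mul_of_nonneg_right (one_add_inv_pow_le_three (Nat.sub_le _ _)) hVε0)

/-- In a finite-horizon layered MDP with `H` layers, if
`b(x,a) ≤ ε(x,a) + (1/H)·E_{x'∼P(·|x,a)}[V^π(x'; b)]` for all `(x,a)`, then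
`V^π(x₀; b) ≤ 3 · V^π(x₀; ε)`. -/
theorem stmt_1
    {X A : Type*} [Fintype X] [Fintype A]
    (H : ℕ) (hH : 1 ≤ H)
    (layer : X → ℕ) (hlayer : ∀ x, layer x ≤ H)
    (x0 : X) (hx0 : layer x0 = 0)
    -- policy π : a probability distribution over actions in each state
    (π : X → A → ℝ) (hπ0 : ∀ x a, 0 ≤ π x a) (hπ1 : ∀ x, ∑ a, π x a = 1)
    -- transition kernel P, supported on the next layer
    (P : X → A → X → ℝ) (hP0 : ∀ x a x', 0 ≤ P x a x')
    (hP1 : ∀ x a, layer x < H → ∑ x', P x a x' = 1)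
    (hPlayer : ∀ x a x', P x a x' ≠ 0 → layer x' = layer x + 1)
    -- nonnegative loss functions b and ε
    (b ε : X → A → ℝ) (hb0 : ∀ x a, 0 ≤ b x a) (hε0 : ∀ x a, 0 ≤ ε x a)
    -- value functions of π under losses b and ε (Bellman equations)
    (Vb Vε : X → ℝ)
    (hVbH : ∀ x, layer x = H → Vb x = 0)
    (hVεH : ∀ x, layer x = H → Vε x = 0)
    (hVb : ∀ x, layer x < H →
      Vb x = ∑ a, π x a * (b x a + ∑ x', P x a x' * Vb x'))
    (hVε : ∀ x, layer x < H →
      Vε x = ∑ a, π x a * (ε x a + ∑ x', P x a x' * Vε x'))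
    -- the key condition relating b and ε
    (hkey : ∀ x a, layer x < H →
      b x a ≤ ε x a + (1 / (H : ℝ)) * ∑ x', P x a x' * Vb x') :
    Vb x0 ≤ 3 * Vε x0 :=
  stmt_1_general H layer hlayer x0 π hπ0 P hP0 hPlayer b ε hε0 Vb Vε hVbH hVεH hVb hVε hkey
end

section
/- In a finite-horizon layered MDP with H layers, let b : X×A → ℝ≥0 be nonnegative and define B by the dilated Bellman equation B(x,a) = b(x,a) + (1+1/H)·E_{x'∼P(·|x,a)}[Σ_{a'} π(a'|x') B(x',a')] with B(x_H,·)=0. Then for any x in layer h, Σ_a π(a|x) B(x,a) ≤ (1+1/H)^{H-h-1} · V^π(x; b), where V^π(x; b) is the value of π under loss function b. -/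
/-!
Write `W x = ∑ a, π(a|x) B(x,a)` and `c = 1 + 1/H`. By backward induction over the layers,
`c · W x ≤ c ^ (H - h) · V x` for every `x` in layer `h`: unrolling the dilated Bellman equation
once, the successors contribute `c · W x'`, which the induction hypothesis bounds by
`c ^ (H - h - 1) · V x'`, and the immediate bonus `b ≥ 0` only grows when multiplied by a power
of `c ≥ 1`. Carrying the extra factor `c` on the left is what makes the induction close: it is
exactly the dilation applied to the next layer.
-/

open Finset

section DilatedBellman

variable {X A : Type*} [Fintype X] [Fintype A]
  {H : ℕ} {layer : X → ℕ} {π : X → A → ℝ} {P : X → A → X → ℝ} {b B : X → A → ℝ} {V : X → ℝ}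
  {c : ℝ}

theorem sum_policy_mul_dilated_le_of_succ (hc : 1 ≤ c)
    (hπ0 : ∀ x a, 0 ≤ π x a) (hP0 : ∀ x a x', 0 ≤ P x a x')
    (hPlayer : ∀ x a x', P x a x' ≠ 0 → layer x' = layer x + 1) (hb0 : ∀ x a, 0 ≤ b x a)
    (hB : ∀ x a, layer x < H →
      B x a = b x a + c * ∑ x', P x a x' * ∑ a', π x' a' * B x' a')
    (hV : ∀ x, layer x < H → V x = ∑ a, π x a * (b x a + ∑ x', P x a x' * V x'))
    {x : X} (hx : layer x < H)
    (hsucc : ∀ a x', P x a x' ≠ 0 →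
      c * ∑ a', π x' a' * B x' a' ≤ c ^ (H - layer x') * V x') :
    ∑ a, π x a * B x a ≤ c ^ (H - layer x - 1) * V x := by
  rw [hV x hx, mul_sum]
  refine sum_le_sum fun a _ => ?_
  rw [hB x a hx, mul_left_comm]
  refine mul_le_mul_of_nonneg_left ?_ (hπ0 x a)
  have hnext : c * ∑ x', P x a x' * ∑ a', π x' a' * B x' a'
      ≤ c ^ (H - layer x - 1) * ∑ x', P x a x' * V x' := by
    rw [mul_sum, mul_sum]
    refine sum_le_sum fun x' _ => ?_
    by_cases hxx' : P x a x' = 0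
    · simp [hxx']
    have hexp : H - layer x' = H - layer x - 1 := by rw [hPlayer x a x' hxx']; omega
    calc c * (P x a x' * ∑ a', π x' a' * B x' a')
        = P x a x' * (c * ∑ a', π x' a' * B x' a') := mul_left_comm _ _ _
      _ ≤ P x a x' * (c ^ (H - layer x - 1) * V x') :=
          hexp ▸ mul_le_mul_of_nonneg_left (hsucc a x' hxx') (hP0 x a x')
      _ = c ^ (H - layer x - 1) * (P x a x' * V x') := mul_left_comm _ _ _
  have hbonus : b x a ≤ c ^ (H - layer x - 1) * b x a :=
    le_mul_of_one_le_left (hb0 x a) (one_le_pow₀ hc)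
  rw [mul_add]
  exact add_le_add hbonus hnext

theorem mul_sum_policy_mul_dilated_le (hc : 1 ≤ c) (hlayer : ∀ x, layer x ≤ H)
    (hπ0 : ∀ x a, 0 ≤ π x a) (hP0 : ∀ x a x', 0 ≤ P x a x')
    (hPlayer : ∀ x a x', P x a x' ≠ 0 → layer x' = layer x + 1) (hb0 : ∀ x a, 0 ≤ b x a)
    (hBH : ∀ x a, layer x = H → B x a = 0)
    (hB : ∀ x a, layer x < H →
      B x a = b x a + c * ∑ x', P x a x' * ∑ a', π x' a' * B x' a')
    (hVH : ∀ x, layer x = H → V x = 0)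
    (hV : ∀ x, layer x < H → V x = ∑ a, π x a * (b x a + ∑ x', P x a x' * V x'))
    (x : X) :
    c * ∑ a, π x a * B x a ≤ c ^ (H - layer x) * V x := by
  induction hn : H - layer x generalizing x with
  | zero =>
    have hxH : layer x = H := le_antisymm (hlayer x) (by omega)
    simp [hBH x _ hxH, hVH x hxH]
  | succ n ih =>
    have hx : layer x < H := by omega
    have hW := sum_policy_mul_dilated_le_of_succ hc hπ0 hP0 hPlayer hb0 hB hV hx
      fun a x' hxx' => by
        have hn' : H - layer x' = n := by rw [hPlayer x a x' hxx']; omega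
        exact hn' ▸ ih x' hn'
    rw [show H - layer x - 1 = n by omega] at hW
    rw [pow_succ']
    exact (mul_le_mul_of_nonneg_left hW (by linarith)).trans_eq (mul_assoc _ _ _).symm

end DilatedBellman

theorem stmt_2_general
    {X A : Type*} [Fintype X] [Fintype A]
    (H : ℕ)
    (layer : X → ℕ) (hlayer : ∀ x, layer x ≤ H)
    (π : X → A → ℝ) (hπ0 : ∀ x a, 0 ≤ π x a)
    (P : X → A → X → ℝ) (hP0 : ∀ x a x', 0 ≤ P x a x')
    (hPlayer : ∀ x a x', P x a x' ≠ 0 → layer x' = layer x + 1)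
    (b : X → A → ℝ) (hb0 : ∀ x a, 0 ≤ b x a)
    -- the dilated bonus B
    (B : X → A → ℝ)
    (hBH : ∀ x a, layer x = H → B x a = 0)
    (hB : ∀ x a, layer x < H →
      B x a = b x a + (1 + 1 / (H : ℝ)) *
        ∑ x', P x a x' * ∑ a', π x' a' * B x' a')
    -- the value function of π under loss b
    (V : X → ℝ)
    (hVH : ∀ x, layer x = H → V x = 0)
    (hV : ∀ x, layer x < H →
      V x = ∑ a, π x a * (b x a + ∑ x', P x a x' * V x'))
    (x : X) (hx : layer x < H) :
    ∑ a, π x a * B x a ≤ (1 + 1 / (H : ℝ)) ^ (H - layer x - 1) * V x := by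
  have hc : (1 : ℝ) ≤ 1 + 1 / (H : ℝ) := le_add_of_nonneg_right (by positivity)
  exact sum_policy_mul_dilated_le_of_succ hc hπ0 hP0 hPlayer hb0 hB hV hx fun _ x' _ =>
    mul_sum_policy_mul_dilated_le hc hlayer hπ0 hP0 hPlayer hb0 hBH hB hVH hV x'

/-- If `B` satisfies the dilated Bellman equation
`B(x,a) = b(x,a) + (1+1/H)·E_{x'∼P(·|x,a)}[Σ_{a'} π(a'|x') B(x',a')]` with
`B(x_H,·) = 0`, then for `x` in layer `h`,
`Σ_a π(a|x) B(x,a) ≤ (1+1/H)^{H-h-1} · V^π(x; b)`. -/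
theorem stmt_2
    {X A : Type*} [Fintype X] [Fintype A]
    (H : ℕ) (hH : 1 ≤ H)
    (layer : X → ℕ) (hlayer : ∀ x, layer x ≤ H)
    (π : X → A → ℝ) (hπ0 : ∀ x a, 0 ≤ π x a) (hπ1 : ∀ x, ∑ a, π x a = 1)
    (P : X → A → X → ℝ) (hP0 : ∀ x a x', 0 ≤ P x a x')
    (hP1 : ∀ x a, layer x < H → ∑ x', P x a x' = 1)
    (hPlayer : ∀ x a x', P x a x' ≠ 0 → layer x' = layer x + 1)
    (b : X → A → ℝ) (hb0 : ∀ x a, 0 ≤ b x a)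
    -- the dilated bonus B
    (B : X → A → ℝ)
    (hBH : ∀ x a, layer x = H → B x a = 0)
    (hB : ∀ x a, layer x < H →
      B x a = b x a + (1 + 1 / (H : ℝ)) *
        ∑ x', P x a x' * ∑ a', π x' a' * B x' a')
    -- the value function of π under loss b
    (V : X → ℝ)
    (hVH : ∀ x, layer x = H → V x = 0)
    (hV : ∀ x, layer x < H →
      V x = ∑ a, π x a * (b x a + ∑ x', P x a x' * V x'))
    (x : X) (hx : layer x < H) :
    ∑ a, π x a * B x a ≤ (1 + 1 / (H : ℝ)) ^ (H - layer x - 1) * V x :=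
  stmt_2_general H layer hlayer π hπ0 P hP0 hPlayer b hb0 B hBH hB V hVH hV x hx
end

section
/- Suppose a sequence of distributions π_1, π_2, ... over a finite action set A evolves by exponential weights: π_1 uniform, and π_{t+1}(a) ∝ π_t(a)·exp(−η ℓ_t(a)), where η > 0 and |η ℓ_t(a)| ≤ 1 for all t,a. Then for any fixed distribution π* over A, Σ_{t=1}^T Σ_a (π_t(a) − π*(a)) ℓ_t(a) ≤ (ln|A|)/η + η Σ_{t=1}^T Σ_a π_t(a) ℓ_t(a)². -/
open Finset

/-!
The potential `Φ t = ∑ a, π* a * log (π t a)` starts at `-log |A|` and never exceeds `0`.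
One update changes it by `-η ⟪π*, ℓ t⟫ - log Z t`, where `Z t = ∑ a, π t a * exp (-η * ℓ t a)`,
and `log Z ≤ Z - 1` together with `exp x ≤ 1 + x + x ^ 2` for `|x| ≤ 1` gives
`log Z t ≤ -η ⟪π t, ℓ t⟫ + η ^ 2 ⟪π t, ℓ t ^ 2⟫`. Summing over `t`, the potential telescopes.
-/

lemma Real.exp_le_one_add_add_sq {x : ℝ} (hx : |x| ≤ 1) : Real.exp x ≤ 1 + x + x ^ 2 := by
  linarith [(abs_le.1 (abs_exp_sub_one_sub_id_le hx)).2]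

section ExpWeights

open Real

variable {A : Type*} [Fintype A]

noncomputable def expWeights (η : ℝ) (l p : A → ℝ) (a : A) : ℝ :=
  p a * exp (-η * l a) / ∑ a', p a' * exp (-η * l a')

variable {η : ℝ} {l p q : A → ℝ}

lemma sum_mul_exp_pos [Nonempty A] (hp : ∀ a, 0 < p a) : 0 < ∑ a, p a * exp (-η * l a) :=
  sum_pos (fun a _ => mul_pos (hp a) (exp_pos _)) univ_nonempty

lemma expWeights_pos [Nonempty A] (hp : ∀ a, 0 < p a) (a : A) : 0 < expWeights η l p a :=
  div_pos (mul_pos (hp a) (exp_pos _)) (sum_mul_exp_pos hp)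

lemma sum_expWeights [Nonempty A] (hp : ∀ a, 0 < p a) : ∑ a, expWeights η l p a = 1 := by
  simp only [expWeights, ← sum_div]
  exact div_self (sum_mul_exp_pos hp).ne'

lemma log_sum_mul_exp_le [Nonempty A] (hp : ∀ a, 0 < p a) (hp1 : ∑ a, p a = 1)
    (hl : ∀ a, |η * l a| ≤ 1) :
    log (∑ a, p a * exp (-η * l a)) ≤ -η * ∑ a, p a * l a + η ^ 2 * ∑ a, p a * l a ^ 2 := by
  have hexpand : ∀ a, p a * (1 + -η * l a + (-η * l a) ^ 2)
      = p a + -η * (p a * l a) + η ^ 2 * (p a * l a ^ 2) := fun a => by ring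
  calc log (∑ a, p a * exp (-η * l a))
      ≤ ∑ a, p a * exp (-η * l a) - 1 := log_le_sub_one_of_pos (sum_mul_exp_pos hp)
    _ ≤ ∑ a, p a * (1 + -η * l a + (-η * l a) ^ 2) - 1 := by
      gcongr with a
      · exact (hp a).le
      · exact exp_le_one_add_add_sq (by rw [neg_mul, abs_neg]; exact hl a)
    _ = -η * ∑ a, p a * l a + η ^ 2 * ∑ a, p a * l a ^ 2 := by
      simp only [hexpand, sum_add_distrib, ← mul_sum, hp1]
      ring

lemma log_expWeights [Nonempty A] (hp : ∀ a, 0 < p a) (a : A) :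
    log (expWeights η l p a) = log (p a) - η * l a - log (∑ a', p a' * exp (-η * l a')) := by
  rw [expWeights, log_div (mul_pos (hp a) (exp_pos _)).ne' (sum_mul_exp_pos hp).ne',
    log_mul (hp a).ne' (exp_ne_zero _), log_exp]
  ring

lemma sum_mul_log_expWeights [Nonempty A] (hp : ∀ a, 0 < p a) (hq1 : ∑ a, q a = 1) :
    ∑ a, q a * log (expWeights η l p a)
      = ∑ a, q a * log (p a) - η * ∑ a, q a * l a - log (∑ a, p a * exp (-η * l a)) := by
  simp_rw [log_expWeights hp, mul_sub, sum_sub_distrib, ← sum_mul, hq1, one_mul, mul_left_comm _ η,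
    ← mul_sum]

lemma expWeights_regret_step [Nonempty A] (hp : ∀ a, 0 < p a) (hp1 : ∑ a, p a = 1)
    (hl : ∀ a, |η * l a| ≤ 1) (hq1 : ∑ a, q a = 1) :
    η * ∑ a, (p a - q a) * l a
      ≤ ∑ a, q a * log (expWeights η l p a) - ∑ a, q a * log (p a)
        + η ^ 2 * ∑ a, p a * l a ^ 2 := by
  rw [sum_mul_log_expWeights hp hq1]
  simp only [sub_mul, sum_sub_distrib]
  linarith [log_sum_mul_exp_le hp hp1 hl]

lemma sum_mul_log_nonpos (hq : ∀ a, 0 ≤ q a) (hp : ∀ a, 0 ≤ p a) (hp1 : ∑ a, p a = 1) :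
    ∑ a, q a * log (p a) ≤ 0 :=
  sum_nonpos fun a _ => mul_nonpos_of_nonneg_of_nonpos (hq a)
    (log_nonpos (hp a) (hp1 ▸ single_le_sum (fun b _ => hp b) (mem_univ a)))

lemma expWeights_iterate_pos [Nonempty A] {ℓ w : ℕ → A → ℝ}
    (h0 : ∀ a, 0 < w 0 a) (hrec : ∀ t, w (t + 1) = expWeights η (ℓ t) (w t)) :
    ∀ t a, 0 < w t a
  | 0 => h0
  | t + 1 => hrec t ▸ expWeights_pos (expWeights_iterate_pos h0 hrec t)

end ExpWeights

/-- regret bound of the exponential weights algorithm. -/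
theorem stmt_4
    {A : Type*} [Fintype A] [Nonempty A]
    (η : ℝ) (hη : 0 < η)
    (T : ℕ)
    (ℓ : ℕ → A → ℝ)
    (π : ℕ → A → ℝ)
    (hπ1 : ∀ a, π 0 a = 1 / (Fintype.card A : ℝ))
    (hπrec : ∀ t a, π (t + 1) a =
      π t a * Real.exp (-η * ℓ t a) / ∑ a', π t a' * Real.exp (-η * ℓ t a'))
    (hbound : ∀ t a, |η * ℓ t a| ≤ 1)
    (πs : A → ℝ) (hπs0 : ∀ a, 0 ≤ πs a) (hπs1 : ∑ a, πs a = 1) :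
    ∑ t ∈ range T, ∑ a, (π t a - πs a) * ℓ t a
      ≤ Real.log (Fintype.card A) / η
        + η * ∑ t ∈ range T, ∑ a, π t a * (ℓ t a) ^ 2 := by
  have hrec : ∀ t, π (t + 1) = expWeights η (ℓ t) (π t) := fun t => funext (hπrec t)
  have hpos : ∀ t a, 0 < π t a :=
    expWeights_iterate_pos (fun a => by rw [hπ1]; positivity) hrec
  have hsum : ∀ t, ∑ a, π t a = 1
    | 0 => by simp [hπ1]
    | t + 1 => hrec t ▸ sum_expWeights (hpos t)
  set Φ : ℕ → ℝ := fun t => ∑ a, πs a * Real.log (π t a)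
  have hstep : ∀ t, η * ∑ a, (π t a - πs a) * ℓ t a
      ≤ Φ (t + 1) - Φ t + η ^ 2 * ∑ a, π t a * ℓ t a ^ 2 := fun t => by
    simp only [Φ, hrec t]
    exact expWeights_regret_step (hpos t) (hsum t) (hbound t) hπs1
  have hΦ0 : Φ 0 = -Real.log (Fintype.card A) := by
    simp only [Φ, hπ1, ← sum_mul, hπs1, one_mul, one_div, Real.log_inv]
  have hΦT : Φ T ≤ 0 := sum_mul_log_nonpos hπs0 (fun a => (hpos T a).le) (hsum T)
  have htotal := sum_le_sum fun t (_ : t ∈ range T) => hstep t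
  rw [← mul_sum, sum_add_distrib, sum_range_sub Φ, ← mul_sum] at htotal
  rw [div_add' _ _ _ hη.ne', le_div_iff₀ hη]
  linarith
end

section
/- Let F_0 ⊂ ... ⊂ F_n be a filtration and X_1,...,X_n real random variables with X_i measurable with respect to F_i, E[X_i | F_{i-1}] = 0, |X_i| ≤ b, and Σ_{i=1}^n E[X_i² | F_{i-1}] ≤ V for fixed b, V ≥ 0. Then for any δ ∈ (0,1), with probability at least 1−δ, Σ_{i=1}^n X_i ≤ V/b + b·log(1/δ). -/
/-!
With `S_k = ∑_{i ≤ k} X_i` and `Q_k = ∑_{i ≤ k} E[X_i² | F_{i-1}]`, the process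
`M_k = exp (S_k / b - Q_k / b²)` is a supermartingale: since `exp y ≤ 1 + y + y²` for `|y| ≤ 1`
and `E[X_i | F_{i-1}] = 0`, one has `E[exp (X_i / b) | F_{i-1}] ≤ 1 + E[X_i² | F_{i-1}] / b² ≤
exp (E[X_i² | F_{i-1}] / b²)`. Hence `E[M_n] ≤ 1`, and on the event `S_n > V / b + b log (1 / δ)`
we have `Q_n ≤ V`, so `M_n ≥ 1 / δ`; Markov's inequality bounds its probability by `δ`.
If `b = 0` all `X_i` vanish and the bound is trivial.
-/

open MeasureTheory Finset Real

section

variable {Ω : Type*} {m m0 : MeasurableSpace Ω} {μ : Measure Ω}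

lemma integrable_exp_div_of_abs_le [IsFiniteMeasure μ] {X : Ω → ℝ} {b : ℝ} (hb : 0 < b)
    (hX : AEStronglyMeasurable X μ) (hXb : ∀ᵐ ω ∂μ, |X ω| ≤ b) :
    Integrable (fun ω => exp (X ω / b)) μ :=
  .of_bound (continuous_exp.comp_aestronglyMeasurable (by fun_prop)) (exp 1) (by
    filter_upwards [hXb] with ω h
    simpa [div_le_one hb] using (abs_le.1 h).2)

lemma condExp_exp_div_le_exp_condExp_sq [IsFiniteMeasure μ] (hm : m ≤ m0) {X : Ω → ℝ} {b : ℝ}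
    (hb : 0 < b) (hX : AEStronglyMeasurable X μ) (hXb : ∀ᵐ ω ∂μ, |X ω| ≤ b)
    (hmean : μ[X|m] =ᵐ[μ] 0) :
    μ[fun ω => exp (X ω / b)|m] ≤ᵐ[μ] fun ω => exp (μ[X ^ 2|m] ω / b ^ 2) := by
  have hXb' : ∀ᵐ ω ∂μ, |X ω / b| ≤ 1 := by
    filter_upwards [hXb] with ω h
    rwa [abs_div, abs_of_pos hb, div_le_one hb]
  have hXi : Integrable X μ := .of_bound hX b (by simpa using hXb)
  have hX2i : Integrable (X ^ 2) μ := .of_bound (hX.pow 2) (b ^ 2) (by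
    filter_upwards [hXb] with ω h
    simpa using pow_le_pow_left₀ (abs_nonneg _) h 2)
  have hexpi := integrable_exp_div_of_abs_le hb hX hXb
  set u : Ω → ℝ := (fun _ => 1) + b⁻¹ • X + (b ^ 2)⁻¹ • X ^ 2
  have hui : Integrable u μ := ((integrable_const 1).add (hXi.smul _)).add (hX2i.smul _)
  have hexp_le_u : (fun ω => exp (X ω / b)) ≤ᵐ[μ] u := by
    filter_upwards [hXb'] with ω h
    have := (abs_le.1 (abs_exp_sub_one_sub_id_le h)).2
    simp only [u, Pi.add_apply, Pi.smul_apply, Pi.pow_apply, smul_eq_mul]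
    field_simp at this ⊢
    linarith
  filter_upwards [condExp_mono hexpi hui hexp_le_u,
    condExp_add ((integrable_const 1).add (hXi.smul b⁻¹)) (hX2i.smul (b ^ 2)⁻¹) m,
    condExp_add (integrable_const 1) (hXi.smul b⁻¹) m, condExp_smul b⁻¹ X m,
    condExp_smul (b ^ 2)⁻¹ (X ^ 2) m, hmean] with ω h h₁ h₂ h₃ h₄ h₅
  calc _ ≤ μ[u|m] ω := h
    _ = 1 + μ[X ^ 2|m] ω / b ^ 2 := by
      simp only [u, h₁, Pi.add_apply, h₂, h₃, h₄, condExp_const hm, Pi.smul_apply, h₅]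
      simp [div_eq_inv_mul]
    _ ≤ _ := by linarith [add_one_le_exp (μ[X ^ 2|m] ω / b ^ 2)]

lemma integral_mul_le_integral_mul_of_condExp_le [IsFiniteMeasure μ] (hm : m ≤ m0)
    {f g h : Ω → ℝ} (hf : StronglyMeasurable[m] f) (hf0 : ∀ ω, 0 ≤ f ω) (hg : Integrable g μ)
    (hfg : Integrable (f * g) μ) (hfh : Integrable (f * h) μ) (hgh : μ[g|m] ≤ᵐ[μ] h) :
    ∫ ω, (f * g) ω ∂μ ≤ ∫ ω, (f * h) ω ∂μ := by
  rw [← integral_condExp hm]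
  refine integral_mono_ae integrable_condExp hfh ?_
  filter_upwards [condExp_mul_of_stronglyMeasurable_left hf hfg hg, hgh] with ω h₁ h₂
  rw [h₁]
  exact mul_le_mul_of_nonneg_left h₂ (hf0 ω)

lemma measure_le_ofReal_of_integral_le_one [IsFiniteMeasure μ] {Z : Ω → ℝ} (hZ : 0 ≤ᵐ[μ] Z)
    (hZi : Integrable Z μ) (hZ1 : ∫ ω, Z ω ∂μ ≤ 1) {δ : ℝ} (hδ : 0 < δ) :
    μ {ω | 1 / δ ≤ Z ω} ≤ ENNReal.ofReal δ := by
  rw [ENNReal.le_ofReal_iff_toReal_le (measure_ne_top μ _) hδ.le]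
  have := (mul_meas_ge_le_integral_of_nonneg hZ hZi (1 / δ)).trans hZ1
  rwa [div_mul_eq_mul_div, one_mul, div_le_one hδ] at this

lemma ofReal_one_sub_le_of_measure_compl_le [IsProbabilityMeasure μ] {s : Set Ω} {δ : ℝ}
    (hδ : 0 ≤ δ) (h : μ sᶜ ≤ ENNReal.ofReal δ) : ENNReal.ofReal (1 - δ) ≤ μ s := by
  rw [ENNReal.ofReal_sub _ hδ, ENNReal.ofReal_one, tsub_le_iff_right]
  calc 1 = μ Set.univ := measure_univ.symm
    _ ≤ μ s + μ sᶜ := measure_univ_le_add_compl s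
    _ ≤ μ s + ENNReal.ofReal δ := by gcongr

end

section FreedmanProcess

variable {Ω : Type*} {m0 : MeasurableSpace Ω} (μ : Measure Ω) (ℱ : Filtration ℕ m0)
  (X : ℕ → Ω → ℝ) (b : ℝ)

noncomputable def freedmanProcess (k : ℕ) (ω : Ω) : ℝ :=
  exp (∑ i ∈ Icc 1 k, (X i ω / b - μ[X i ^ 2|ℱ (i - 1)] ω / b ^ 2))

variable {μ ℱ X b}

lemma freedmanProcess_pos {k : ℕ} {ω : Ω} : 0 < freedmanProcess μ ℱ X b k ω :=
  exp_pos _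

lemma freedmanProcess_succ (k : ℕ) (ω : Ω) :
    freedmanProcess μ ℱ X b (k + 1) ω = freedmanProcess μ ℱ X b k ω
      * exp (-(μ[X (k + 1) ^ 2|ℱ k] ω / b ^ 2)) * exp (X (k + 1) ω / b) := by
  rw [freedmanProcess, freedmanProcess, sum_Icc_succ_top (by omega), Nat.add_sub_cancel, mul_assoc,
    ← exp_add, ← exp_add]
  congr 1
  ring

lemma stronglyMeasurable_freedmanProcess {k : ℕ}
    (hX : ∀ i ∈ Icc 1 k, StronglyMeasurable[ℱ i] (X i)) :
    StronglyMeasurable[ℱ k] (freedmanProcess μ ℱ X b k) := by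
  refine continuous_exp.comp_stronglyMeasurable (Finset.stronglyMeasurable_fun_sum _ fun i hi => ?_)
  have hik := (mem_Icc.1 hi).2
  simp only [div_eq_mul_inv]
  exact (((hX i hi).mono (ℱ.mono hik)).mul_const _).sub
    ((stronglyMeasurable_condExp.mono (ℱ.mono (by omega))).mul_const _)

lemma freedmanProcess_le_exp (hb : 0 < b) {k : ℕ} (hXb : ∀ i ∈ Icc 1 k, ∀ᵐ ω ∂μ, |X i ω| ≤ b) :
    ∀ᵐ ω ∂μ, freedmanProcess μ ℱ X b k ω ≤ exp k := by
  have hq : ∀ᵐ ω ∂μ, ∀ i, 0 ≤ μ[X i ^ 2|ℱ (i - 1)] ω :=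
    ae_all_iff.2 fun i => condExp_nonneg (ae_of_all _ fun ω => sq_nonneg (X i ω))
  filter_upwards [(Filter.eventually_all_finset _).2 hXb, hq] with ω hX hq
  rw [freedmanProcess, exp_le_exp]
  calc _ ≤ ∑ _i ∈ Icc 1 k, (1 : ℝ) := sum_le_sum fun i hi => by
        have : X i ω / b ≤ 1 := (div_le_one hb).2 (abs_le.1 (hX i hi)).2
        have : 0 ≤ μ[X i ^ 2|ℱ (i - 1)] ω / b ^ 2 := div_nonneg (hq i) (sq_nonneg b)
        linarith
    _ = k := by simp

lemma integrable_freedmanProcess [IsFiniteMeasure μ] (hb : 0 < b) {k : ℕ}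
    (hX : ∀ i ∈ Icc 1 k, StronglyMeasurable[ℱ i] (X i))
    (hXb : ∀ i ∈ Icc 1 k, ∀ᵐ ω ∂μ, |X i ω| ≤ b) :
    Integrable (freedmanProcess μ ℱ X b k) μ :=
  .of_bound ((stronglyMeasurable_freedmanProcess hX).mono (ℱ.le k)).aestronglyMeasurable _ (by
    filter_upwards [freedmanProcess_le_exp hb hXb] with ω h
    rwa [Real.norm_of_nonneg freedmanProcess_pos.le])

lemma integral_freedmanProcess_le_one [IsProbabilityMeasure μ] (hb : 0 < b) {n : ℕ}
    (hX : ∀ i ∈ Icc 1 n, StronglyMeasurable[ℱ i] (X i))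
    (hmean : ∀ i ∈ Icc 1 n, μ[X i|ℱ (i - 1)] =ᵐ[μ] 0)
    (hXb : ∀ i ∈ Icc 1 n, ∀ᵐ ω ∂μ, |X i ω| ≤ b) :
    ∫ ω, freedmanProcess μ ℱ X b n ω ∂μ ≤ 1 := by
  induction n with
  | zero => simp [freedmanProcess]
  | succ n ih =>
    have hsub : Icc 1 n ⊆ Icc 1 (n + 1) := Icc_subset_Icc_right n.le_succ
    have hn : n + 1 ∈ Icc 1 (n + 1) := by simp
    set q := μ[X (n + 1) ^ 2|ℱ n]
    set f : Ω → ℝ := fun ω => freedmanProcess μ ℱ X b n ω * exp (-(q ω / b ^ 2))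
    have hfg : freedmanProcess μ ℱ X b (n + 1) = f * fun ω => exp (X (n + 1) ω / b) :=
      funext (freedmanProcess_succ n)
    have hfh : (f * fun ω => exp (q ω / b ^ 2)) = freedmanProcess μ ℱ X b n := by
      ext ω
      simp [f, mul_assoc, ← exp_add]
    have hf : StronglyMeasurable[ℱ n] f :=
      (stronglyMeasurable_freedmanProcess fun i hi => hX i (hsub hi)).mul
        ((continuous_exp.comp (continuous_id.div_const _).neg).comp_stronglyMeasurable
          stronglyMeasurable_condExp)
    have hXn : AEStronglyMeasurable (X (n + 1)) μ :=
      ((hX _ hn).mono (ℱ.le _)).aestronglyMeasurable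
    calc ∫ ω, freedmanProcess μ ℱ X b (n + 1) ω ∂μ
        ≤ ∫ ω, (f * fun ω => exp (q ω / b ^ 2)) ω ∂μ := by
          rw [hfg]
          refine integral_mul_le_integral_mul_of_condExp_le (ℱ.le n) hf
            (fun ω => (mul_pos freedmanProcess_pos (exp_pos _)).le)
            (integrable_exp_div_of_abs_le hb hXn (hXb _ hn))
            (hfg ▸ integrable_freedmanProcess hb hX hXb)
            (hfh ▸ integrable_freedmanProcess hb (fun i hi => hX i (hsub hi))
              (fun i hi => hXb i (hsub hi)))
            (condExp_exp_div_le_exp_condExp_sq (ℱ.le n) hb hXn (hXb _ hn)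
              (by simpa using hmean _ hn))
      _ ≤ 1 := by
          rw [hfh]
          exact ih (fun i hi => hX i (hsub hi)) (fun i hi => hmean i (hsub hi))
            (fun i hi => hXb i (hsub hi))

lemma one_div_le_freedmanProcess (hb : 0 < b) {n : ℕ} {V δ : ℝ} (hδ : 0 < δ) {ω : Ω}
    (hq : ∑ i ∈ Icc 1 n, μ[X i ^ 2|ℱ (i - 1)] ω ≤ V)
    (hS : V / b + b * log (1 / δ) < ∑ i ∈ Icc 1 n, X i ω) :
    1 / δ ≤ freedmanProcess μ ℱ X b n ω := by
  rw [← exp_log (one_div_pos.2 hδ), freedmanProcess, exp_le_exp, sum_sub_distrib, ← sum_div,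
    ← sum_div]
  have hS' : V / b ^ 2 + log (1 / δ) < (∑ i ∈ Icc 1 n, X i ω) / b := by
    rw [lt_div_iff₀ hb]
    calc (V / b ^ 2 + log (1 / δ)) * b = V / b + b * log (1 / δ) := by field_simp
      _ < _ := hS
  have hq' := div_le_div_of_nonneg_right hq (sq_nonneg b)
  linarith

end FreedmanProcess

theorem stmt_5_general
    {Ω : Type*} {m0 : MeasurableSpace Ω} (μ : Measure Ω) [IsProbabilityMeasure μ]
    (ℱ : Filtration ℕ m0)
    (n : ℕ) (X : ℕ → Ω → ℝ)
    (b V : ℝ) (hb : 0 ≤ b)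
    (hadapted : ∀ i ∈ Icc 1 n, StronglyMeasurable[ℱ i] (X i))
    (hmean : ∀ i ∈ Icc 1 n, μ[X i|ℱ (i - 1)] =ᵐ[μ] 0)
    (hbdd : ∀ i ∈ Icc 1 n, ∀ᵐ ω ∂μ, |X i ω| ≤ b)
    (hvar : ∀ᵐ ω ∂μ, ∑ i ∈ Icc 1 n, (μ[X i ^ 2|ℱ (i - 1)]) ω ≤ V)
    (δ : ℝ) (hδ : δ ∈ Set.Ioo (0 : ℝ) 1) :
    ENNReal.ofReal (1 - δ)
      ≤ μ {ω | ∑ i ∈ Icc 1 n, X i ω ≤ V / b + b * Real.log (1 / δ)} := by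
  refine ofReal_one_sub_le_of_measure_compl_le hδ.1.le ?_
  simp only [Set.compl_ofPred, not_le]
  rcases hb.eq_or_lt with rfl | hb
  · have hsum : ∀ᵐ ω ∂μ, ∑ i ∈ Icc 1 n, X i ω = 0 := by
      filter_upwards [(Filter.eventually_all_finset _).2 hbdd] with ω h
      exact sum_eq_zero fun i hi => abs_nonpos_iff.1 (h i hi)
    rw [measure_eq_zero_iff_ae_notMem.2 (by filter_upwards [hsum] with ω h; simp [h])]
    exact zero_le
  · calc μ {ω | V / b + b * log (1 / δ) < ∑ i ∈ Icc 1 n, X i ω}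
        ≤ μ {ω | 1 / δ ≤ freedmanProcess μ ℱ X b n ω} := measure_mono_ae <| by
          filter_upwards [hvar] with ω hq hS using one_div_le_freedmanProcess hb hδ.1 hq hS
      _ ≤ ENNReal.ofReal δ :=
        measure_le_ofReal_of_integral_le_one (ae_of_all _ fun _ => freedmanProcess_pos.le)
          (integrable_freedmanProcess hb hadapted hbdd)
          (integral_freedmanProcess_le_one hb hadapted hmean hbdd) hδ.1

/-- a special form of Freedman's inequality. -/
theorem stmt_5
    {Ω : Type*} {m0 : MeasurableSpace Ω} (μ : Measure Ω) [IsProbabilityMeasure μ]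
    (ℱ : Filtration ℕ m0)
    (n : ℕ) (X : ℕ → Ω → ℝ)
    (b V : ℝ) (hb : 0 ≤ b) (hV : 0 ≤ V)
    (hadapted : ∀ i ∈ Icc 1 n, StronglyMeasurable[ℱ i] (X i))
    (hmean : ∀ i ∈ Icc 1 n, μ[X i|ℱ (i - 1)] =ᵐ[μ] 0)
    (hbdd : ∀ i ∈ Icc 1 n, ∀ᵐ ω ∂μ, |X i ω| ≤ b)
    (hvar : ∀ᵐ ω ∂μ, ∑ i ∈ Icc 1 n, (μ[X i ^ 2|ℱ (i - 1)]) ω ≤ V)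
    (δ : ℝ) (hδ : δ ∈ Set.Ioo (0 : ℝ) 1) :
    ENNReal.ofReal (1 - δ)
      ≤ μ {ω | ∑ i ∈ Icc 1 n, X i ω ≤ V / b + b * Real.log (1 / δ)} :=
  stmt_5_general μ ℱ n X b V hb hadapted hmean hbdd hvar δ hδ
end
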